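/- Let X be a connected, locally path-connected, compact metric space with more than one point and with no cut points. Then X contains a simple closed curve (an embedded copy of S¹). -/

import Mathlib

/-!
Take `a ≠ b`, an arc `α` from `a` to `b` and a point `α t₀` strictly inside it. As `α t₀` is not a
cut point, a path `β` from `a` to `b` avoids it. After its last visit to `α '' [0, t₀]`, `β` runs
outside `α` until it first hits `α '' [t₀, 1]`; this piece of `β`, together with the piece of `α`
between the two points where it leaves and rejoins `α`, is a simple closed curve once both pieces
are replaced by arcs.

Arcs exist because every path `γ` with distinct ends contains one. By Zorn's lemma there is a
minimal closed `M ∋ 0, 1` such that `γ` takes the same value at both ends of each gap of `M`.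
Collapsing the gaps of `M` gives a map with the same ends and a smaller image, whose fibres are
intervals by minimality. A monotone real coordinate separating these fibres (a weighted sum of
running maxima of distances, taken from the points of a dense sequence) identifies that image with
a compact interval.
-/

open Set Topology Filter unitInterval

section Gaps

variable {α X : Type*} [CompleteLinearOrder α] [TopologicalSpace α]

structure ConstantAcrossGaps (γ : α → X) (K : Set α) : Prop where
  isClosed : IsClosed K
  bot_mem : ⊥ ∈ K
  top_mem : ⊤ ∈ K
  apply_eq : ∀ ⦃s t⦄, s ∈ K → t ∈ K → s < t → Disjoint (Ioo s t) K → γ s = γ t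

variable [OrderTopology α]

lemma IsClosed.exists_gap_of_disjoint_Ioo {K : Set α} (hK : IsClosed K) {s s₁ t₁ t : α}
    (hs : s ∈ K) (ht : t ∈ K) (hss₁ : s ≤ s₁) (ht₁t : t₁ ≤ t) (hK₁ : Disjoint (Ioo s₁ t₁) K) :
    ∃ a ∈ Icc s s₁, ∃ b ∈ Icc t₁ t, a ∈ K ∧ b ∈ K ∧ Disjoint (Ioo a b) K := by
  have ha := IsClosed.sSup_mem (s := K ∩ Icc s s₁) ⟨s, hs, le_rfl, hss₁⟩ (hK.inter isClosed_Icc)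
  have hb := IsClosed.sInf_mem (s := K ∩ Icc t₁ t) ⟨t, ht, ht₁t, le_rfl⟩ (hK.inter isClosed_Icc)
  refine ⟨_, ha.2, _, hb.2, ha.1, hb.1, disjoint_left.2 fun x hx hxK => ?_⟩
  rcases le_or_gt x s₁ with hxs₁ | hs₁x
  · exact hx.1.not_ge (le_sSup ⟨hxK, ha.2.1.trans hx.1.le, hxs₁⟩)
  rcases le_or_gt t₁ x with ht₁x | hxt₁
  · exact hx.2.not_ge (sInf_le ⟨hxK, ht₁x, hx.2.le.trans hb.2.2⟩)
  · exact disjoint_left.1 hK₁ ⟨hs₁x, hxt₁⟩ hxK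

/-- Otherwise the points of `M` inside `Ioo s t` could be removed from `M`. -/
lemma Minimal.apply_ne {γ : α → X} {M : Set α} (hM : Minimal (ConstantAcrossGaps γ) M)
    {s t : α} (hs : s ∈ M) (ht : t ∈ M) (hmid : ¬Disjoint (Ioo s t) M) : γ s ≠ γ t := by
  intro heq
  obtain ⟨z, hz, hzM⟩ := not_disjoint_iff.1 hmid
  suffices ConstantAcrossGaps γ (M \ Ioo s t) from (hM.2 this sdiff_subset hzM).2 hz
  refine ⟨hM.1.isClosed.sdiff isOpen_Ioo, ⟨hM.1.bot_mem, fun h => not_lt_bot h.1⟩,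
    ⟨hM.1.top_mem, fun h => not_top_lt h.2⟩, fun x y hx hy hxy hgap => ?_⟩
  by_cases hxyM : Disjoint (Ioo x y) M
  · exact hM.1.apply_eq hx.1 hy.1 hxy hxyM
  obtain ⟨w, hw, hwM⟩ := not_disjoint_iff.1 hxyM
  have hwst : w ∈ Ioo s t := by_contra fun h => disjoint_left.1 hgap hw ⟨hwM, h⟩
  have hxs : x = s := by
    refine le_antisymm (le_of_not_gt fun h => hx.2 ⟨h, hw.1.trans hwst.2⟩)
      (le_of_not_gt fun h => ?_)
    exact disjoint_left.1 hgap ⟨h, hwst.1.trans hw.2⟩ ⟨hs, fun h' => h'.1.false⟩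
  have hyt : y = t := by
    refine le_antisymm (le_of_not_gt fun h => ?_)
      (le_of_not_gt fun h => hy.2 ⟨hwst.1.trans hw.2, h⟩)
    exact disjoint_left.1 hgap ⟨hw.1.trans hwst.2, h⟩ ⟨ht, fun h' => h'.2.false⟩
  rw [hxs, hyt, heq]

variable [DenselyOrdered α] [TopologicalSpace X] [T2Space X] {γ : α → X}

/-- If `γ s ≠ γ t`, take disjoint neighbourhoods `U`, `V` of them. By compactness some `K ∈ c`
misses a middle part `Icc s₁ t₁` of the gap `Ioo s t` of `⋂₀ c`, and the gap of `K` containing it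
has its ends in `Icc s s₁ ⊆ γ ⁻¹' U` and `Icc t₁ t ⊆ γ ⁻¹' V`. -/
lemma ConstantAcrossGaps.sInter (hγ : Continuous γ) {c : Set (Set α)} (hc : c.Nonempty)
    (hcK : ∀ K ∈ c, ConstantAcrossGaps γ K) (hchain : IsChain (· ⊆ ·) c) :
    ConstantAcrossGaps γ (⋂₀ c) := by
  refine ⟨isClosed_sInter fun K hK => (hcK K hK).isClosed, fun K hK => (hcK K hK).bot_mem,
    fun K hK => (hcK K hK).top_mem, fun s t hs ht hst hgap => ?_⟩
  by_contra hne
  obtain ⟨U, V, hU, hV, hsU, htV, hUV⟩ := t2_separation hne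
  obtain ⟨m, hsm, hmt⟩ := exists_between hst
  obtain ⟨s₂, hss₂, hs₂⟩ := (mem_nhdsGE_iff_exists_Ico_subset' hsm).1 <|
    mem_nhdsWithin_of_mem_nhds <|
      inter_mem (hγ.continuousAt.preimage_mem_nhds (hU.mem_nhds hsU)) (Iio_mem_nhds hsm)
  obtain ⟨s₁, hss₁, hs₁s₂⟩ := exists_between hss₂
  obtain ⟨t₂, ht₂t, ht₂⟩ := (mem_nhdsLE_iff_exists_Ioc_subset' hmt).1 <|
    mem_nhdsWithin_of_mem_nhds <|
      inter_mem (hγ.continuousAt.preimage_mem_nhds (hV.mem_nhds htV)) (Ioi_mem_nhds hmt)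
  obtain ⟨t₁, ht₂t₁, ht₁t⟩ := exists_between ht₂t
  have hsU' : Icc s s₁ ⊆ γ ⁻¹' U ∩ Iio m := (Icc_subset_Ico_right hs₁s₂).trans hs₂
  have htV' : Icc t₁ t ⊆ γ ⁻¹' V ∩ Ioi m := (Icc_subset_Ioc_left ht₂t₁).trans ht₂
  obtain ⟨K, hKc, hK⟩ : ∃ K ∈ c, Disjoint (Icc s₁ t₁) K := by
    have : Nonempty c := hc.to_subtype
    have hdir : Directed (· ⊇ ·) (fun K : c => (K : Set α)) := by
      rintro ⟨K₁, h₁⟩ ⟨K₂, h₂⟩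
      rcases hchain.total h₁ h₂ with h | h
      · exact ⟨⟨K₁, h₁⟩, le_rfl, h⟩
      · exact ⟨⟨K₂, h₂⟩, h, le_rfl⟩
    have hmid : Icc s₁ t₁ ∩ ⋂ K : c, (K : Set α) = ∅ := by
      rw [← sInter_eq_iInter, ← disjoint_iff_inter_eq_empty]
      exact hgap.mono_left (Icc_subset_Ioo hss₁ ht₁t)
    obtain ⟨⟨K, hKc⟩, hK⟩ := isCompact_Icc.elim_directed_family_closed _
      (fun K : c => (hcK K K.2).isClosed) hmid hdir
    exact ⟨K, hKc, disjoint_iff_inter_eq_empty.2 hK⟩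
  obtain ⟨a, ha, b, hb, haK, hbK, hab⟩ := (hcK K hKc).isClosed.exists_gap_of_disjoint_Ioo
    (hs K hKc) (ht K hKc) hss₁.le ht₁t.le (hK.mono_left Ioo_subset_Icc_self)
  have hγab := (hcK K hKc).apply_eq haK hbK ((hsU' ha).2.trans (htV' hb).2) hab
  exact hUV.ne_of_mem (hsU' ha).1 (hγab ▸ (htV' hb).1) rfl

lemma exists_minimal_constantAcrossGaps (hγ : Continuous γ) :
    ∃ M, Minimal (ConstantAcrossGaps γ) M := by
  obtain ⟨M, hM⟩ := zorn_superset {K | ConstantAcrossGaps γ K} fun c hcK hchain => by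
    rcases c.eq_empty_or_nonempty with rfl | hc
    · refine ⟨univ, ⟨isClosed_univ, mem_univ _, mem_univ _, fun _ _ _ _ hst hgap => ?_⟩, by simp⟩
      exact absurd (disjoint_univ.1 hgap) (nonempty_Ioo.2 hst).ne_empty
    · exact ⟨⋂₀ c, .sInter hγ hc hcK hchain, fun K hK => sInter_subset_of_mem hK⟩
  exact ⟨M, hM⟩

end Gaps

section Collapse

variable {α X : Type*} [CompleteLinearOrder α] {M : Set α}

lemma disjoint_Ioo_sSup_inter_Iic_sInf_inter_Ici (M : Set α) (x : α) :
    Disjoint (Ioo (sSup (M ∩ Iic x)) (sInf (M ∩ Ici x))) M := by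
  refine disjoint_left.2 fun m hm hmM => ?_
  rcases le_total m x with hmx | hxm
  · exact hm.1.not_ge (le_sSup ⟨hmM, hmx⟩)
  · exact hm.2.not_ge (sInf_le ⟨hmM, hxm⟩)

noncomputable def collapse (γ : α → X) (M : Set α) (x : α) : X := γ (sSup (M ∩ Iic x))

variable {γ : α → X}

lemma collapse_apply_of_mem {x : α} (hx : x ∈ M) : collapse γ M x = γ x := by
  have : IsGreatest (M ∩ Iic x) x := ⟨⟨hx, le_rfl⟩, fun _ hy => hy.2⟩
  rw [collapse, this.isLUB.sSup_eq]

variable [TopologicalSpace α] [OrderTopology α]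

lemma IsClosed.sSup_inter_Iic_mem (hM : IsClosed M) (hbot : ⊥ ∈ M) (x : α) :
    sSup (M ∩ Iic x) ∈ M ∩ Iic x :=
  IsClosed.sSup_mem ⟨⊥, hbot, bot_le⟩ (hM.inter isClosed_Iic)

lemma IsClosed.sInf_inter_Ici_mem (hM : IsClosed M) (htop : ⊤ ∈ M) (x : α) :
    sInf (M ∩ Ici x) ∈ M ∩ Ici x :=
  IsClosed.sInf_mem ⟨⊤, htop, le_top⟩ (hM.inter isClosed_Ici)

lemma ConstantAcrossGaps.collapse_eq_sInf (hM : ConstantAcrossGaps γ M) (x : α) :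
    collapse γ M x = γ (sInf (M ∩ Ici x)) := by
  have hr := hM.isClosed.sSup_inter_Iic_mem hM.bot_mem x
  have hl := hM.isClosed.sInf_inter_Ici_mem hM.top_mem x
  rcases (hr.2.trans hl.2).eq_or_lt with heq | hlt
  · rw [collapse, heq]
  · exact hM.apply_eq hr.1 hl.1 hlt (disjoint_Ioo_sSup_inter_Iic_sInf_inter_Ici M x)

lemma ConstantAcrossGaps.continuous_collapse [TopologicalSpace X] (hM : ConstantAcrossGaps γ M)
    (hγ : Continuous γ) : Continuous (collapse γ M) := by
  refine continuous_iff_continuousAt.2 fun x => ?_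
  have hr := hM.isClosed.sSup_inter_Iic_mem hM.bot_mem
  have hl := hM.isClosed.sInf_inter_Ici_mem hM.top_mem
  by_cases hx : x ∈ M
  · rw [continuousAt_iff_continuous_left_right, ContinuousWithinAt, ContinuousWithinAt,
      collapse_apply_of_mem hx]
    constructor
    · have hlim : Tendsto (fun y => sInf (M ∩ Ici y)) (𝓝[≤] x) (𝓝 x) :=
        tendsto_of_tendsto_of_tendsto_of_le_of_le' (tendsto_id.mono_left nhdsWithin_le_nhds)
          tendsto_const_nhds (eventually_nhdsWithin_of_forall fun y _ => (hl y).2)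
          (eventually_nhdsWithin_of_forall fun _ hy => sInf_le ⟨hx, hy⟩)
      rw [funext hM.collapse_eq_sInf]
      exact (hγ.tendsto x).comp hlim
    · have hlim : Tendsto (fun y => sSup (M ∩ Iic y)) (𝓝[≥] x) (𝓝 x) :=
        tendsto_of_tendsto_of_tendsto_of_le_of_le' tendsto_const_nhds
          (tendsto_id.mono_left nhdsWithin_le_nhds)
          (eventually_nhdsWithin_of_forall fun _ hy => le_sSup ⟨hx, hy⟩)
          (eventually_nhdsWithin_of_forall fun y _ => (hr y).2)
      exact (hγ.tendsto x).comp hlim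
  · -- off `M`, `collapse γ M` is constant on the gap of `M` around `x`
    have hrx : sSup (M ∩ Iic x) < x := (hr x).2.lt_of_ne fun h => hx (h ▸ (hr x).1)
    have hxl : x < sInf (M ∩ Ici x) := (hl x).2.lt_of_ne' fun h => hx (h ▸ (hl x).1)
    refine (continuousAt_const (y := collapse γ M x)).congr
      (mem_of_superset (Ioo_mem_nhds hrx hxl) fun y hy => ?_)
    suffices M ∩ Iic y = M ∩ Iic x from congrArg (γ ∘ sSup) this.symm
    refine ext fun m => and_congr_right fun hm => ⟨fun hmy => le_of_not_gt fun hxm => ?_,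
      fun hmx => ((le_sSup (show m ∈ M ∩ Iic x from ⟨hm, hmx⟩)).trans_lt hy.1).le⟩
    exact disjoint_left.1 (disjoint_Ioo_sSup_inter_Iic_sInf_inter_Ici M x)
      ⟨hrx.trans hxm, hmy.trans_lt hy.2⟩ hm

lemma Minimal.collapse_eq_of_mem_Icc (hM : Minimal (ConstantAcrossGaps γ) M) {x y z : α}
    (hxy : collapse γ M x = collapse γ M y) (hz : z ∈ Icc x y) :
    collapse γ M z = collapse γ M x := by
  have hr := hM.1.isClosed.sSup_inter_Iic_mem hM.1.bot_mem
  have hmono {a b : α} (hab : a ≤ b) : sSup (M ∩ Iic a) ≤ sSup (M ∩ Iic b) :=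
    sSup_le_sSup (inter_subset_inter_right _ (Iic_subset_Iic.2 hab))
  have hxz := hmono hz.1
  have hzy := hmono hz.2
  rcases (hxz.trans hzy).eq_or_lt with heq | hlt
  · rw [collapse, collapse, le_antisymm (heq ▸ hzy) hxz]
  have hgap : Disjoint (Ioo (sSup (M ∩ Iic x)) (sSup (M ∩ Iic y))) M :=
    by_contra fun h => hM.apply_ne (hr x).1 (hr y).1 h hxy
  rcases hxz.eq_or_lt with hxz | hxz
  · rw [collapse, collapse, hxz]
  rcases hzy.eq_or_lt with hzy | hzy
  · rw [collapse, collapse, hzy]; exact hxy.symm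
  exact absurd (hr z).1 (disjoint_left.1 hgap ⟨hxz, hzy⟩)

end Collapse

section Arc

variable {X : Type*} [TopologicalSpace X]

theorem exists_injective_path_of_monotone_of_fibers_eq {δ : I → X} {ψ : I → ℝ}
    (hδ : Continuous δ) (hψ : Continuous ψ) (hmono : Monotone ψ)
    (hfib : ∀ x y, ψ x = ψ y ↔ δ x = δ y) (h01 : δ 0 ≠ δ 1) :
    ∃ p : Path (δ 0) (δ 1), Function.Injective p ∧ range p ⊆ range δ := by
  have hψ01 : ψ 0 < ψ 1 := (hmono zero_le_one).lt_of_ne (mt (hfib 0 1).1 h01)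
  let Φ : C(I, Icc (ψ 0) (ψ 1)) :=
    ⟨fun x => ⟨ψ x, hmono nonneg', hmono le_one'⟩, hψ.subtype_mk _⟩
  have hΦ : IsQuotientMap Φ := Φ.continuous.isClosedMap.isQuotientMap Φ.continuous
    fun ⟨_, hy⟩ => (intermediate_value_univ 0 1 hψ hy).imp fun _ hx => Subtype.ext hx
  have hfac : Function.FactorsThrough δ Φ := fun x y h => (hfib x y).1 (congrArg Subtype.val h)
  let f := hΦ.lift ⟨δ, hδ⟩ hfac
  have hf (x : I) : f (Φ x) = δ x := DFunLike.congr_fun (hΦ.lift_comp ⟨δ, hδ⟩ hfac) x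
  have hfinj : Function.Injective f := fun a b hab => by
    obtain ⟨x, rfl⟩ := hΦ.surjective a
    obtain ⟨y, rfl⟩ := hΦ.surjective b
    rw [hf, hf] at hab
    exact Subtype.ext ((hfib x y).2 hab)
  let e := (iccHomeoI (ψ 0) (ψ 1) hψ01).symm
  have he0 : e 0 = Φ 0 := Subtype.ext (by simp [e, Φ, iccHomeoI_symm_apply_coe])
  have he1 : e 1 = Φ 1 := Subtype.ext (by simp [e, Φ, iccHomeoI_symm_apply_coe])
  refine ⟨⟨f.comp ⟨e, e.continuous⟩, by simp [he0, hf], by simp [he1, hf]⟩,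
    hfinj.comp e.injective, ?_⟩
  rintro _ ⟨t, rfl⟩
  obtain ⟨x, hx⟩ := hΦ.surjective (e t)
  exact ⟨x, by simp [← hx, hf]⟩

end Arc

section Metric

variable {X : Type*} [MetricSpace X] {δ : I → X}

-- `Icc q (q ⊔ x)` is never empty, which makes the function continuous at `x = q`
noncomputable def maxDistFrom (δ : I → X) (q x : I) : ℝ :=
  sSup ((fun y => dist (δ q) (δ y)) '' Icc q (q ⊔ x))

lemma continuous_maxDistFrom (hδ : Continuous δ) (q : I) : Continuous (maxDistFrom δ q) := by
  have hrange (x : I) : Icc q (q ⊔ x) = range (Icc.convexComb q (q ⊔ x)) := by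
    rw [Path.range_subpathAux, uIcc_of_le le_sup_left]
  have hcont : Continuous fun p : I × I => dist (δ q) (δ (Icc.convexComb q (q ⊔ p.1) p.2)) :=
    continuous_const.dist (hδ.comp (Icc.continuous_convexComb_prod.comp
      (continuous_const.prodMk ((continuous_const.sup continuous_fst).prodMk continuous_snd))))
  convert isCompact_univ.continuous_sSup
    (f := fun x s => dist (δ q) (δ (Icc.convexComb q (q ⊔ x) s))) hcont using 2 with x
  rw [maxDistFrom, hrange, image_univ, ← range_comp]
  rfl

lemma bddAbove_maxDistFrom_set (hδ : Continuous δ) (q x : I) :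
    BddAbove ((fun y => dist (δ q) (δ y)) '' Icc q (q ⊔ x)) :=
  (isCompact_Icc.image (continuous_const.dist hδ)).bddAbove

lemma dist_le_maxDistFrom (hδ : Continuous δ) {q y : I} (hqy : q ≤ y) :
    dist (δ q) (δ y) ≤ maxDistFrom δ q y :=
  le_csSup (bddAbove_maxDistFrom_set hδ q y) ⟨y, ⟨hqy, le_sup_right⟩, rfl⟩

lemma maxDistFrom_nonneg (q x : I) : 0 ≤ maxDistFrom δ q x :=
  Real.sSup_nonneg (by rintro _ ⟨y, -, rfl⟩; exact dist_nonneg)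

lemma maxDistFrom_of_le {q x : I} (hxq : x ≤ q) : maxDistFrom δ q x = 0 := by
  simp [maxDistFrom, sup_eq_left.2 hxq]

lemma maxDistFrom_le_diam (hδ : Continuous δ) (q x : I) :
    maxDistFrom δ q x ≤ Metric.diam (range δ) :=
  csSup_le ⟨_, mem_image_of_mem _ (left_mem_Icc.2 le_sup_left)⟩ <| by
    rintro _ ⟨y, -, rfl⟩
    exact Metric.dist_le_diam_of_mem (isCompact_range hδ).isBounded (mem_range_self _)
      (mem_range_self _)

lemma monotone_maxDistFrom (hδ : Continuous δ) (q : I) : Monotone (maxDistFrom δ q) :=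
  fun _ y hxy => csSup_le_csSup (bddAbove_maxDistFrom_set hδ q y)
    ⟨_, mem_image_of_mem _ (left_mem_Icc.2 le_sup_left)⟩
    (image_mono (Icc_subset_Icc_right (sup_le_sup_left hxy q)))

lemma maxDistFrom_eq_of_fiber (hδ : Continuous δ)
    (hconv : ∀ x y z, δ x = δ y → z ∈ Icc x y → δ z = δ x) (q : I) {x y : I} (hxy : x ≤ y)
    (hδxy : δ x = δ y) : maxDistFrom δ q x = maxDistFrom δ q y := by
  refine (monotone_maxDistFrom hδ q hxy).antisymm (csSup_le
    ⟨_, mem_image_of_mem _ (left_mem_Icc.2 le_sup_left)⟩ ?_)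
  rintro _ ⟨z, hz, rfl⟩
  rcases le_or_gt z (q ⊔ x) with hzx | hxz
  · exact le_csSup (bddAbove_maxDistFrom_set hδ q x) ⟨z, ⟨hz.1, hzx⟩, rfl⟩
  have hzy : z ≤ y := (le_sup_iff.1 hz.2).resolve_left (le_sup_left.trans_lt hxz).not_ge
  have hw : q ⊔ x ∈ Icc x y := ⟨le_sup_right, hxz.le.trans hzy⟩
  have := hconv x y z hδxy ⟨le_sup_right.trans hxz.le, hzy⟩
  change dist (δ q) (δ z) ≤ _
  rw [this, ← hconv x y _ hδxy hw]
  exact le_csSup (bddAbove_maxDistFrom_set hδ q x) ⟨q ⊔ x, ⟨le_sup_left, le_rfl⟩, rfl⟩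

noncomputable def fiberCoord (δ : I → X) (u : ℕ → I) (x : I) : ℝ :=
  ∑' n, (1 / 2 : ℝ) ^ n * maxDistFrom δ (u n) x

lemma weighted_maxDistFrom_mem_Icc (hδ : Continuous δ) (n : ℕ) (q x : I) :
    (1 / 2 : ℝ) ^ n * maxDistFrom δ q x ∈ Icc 0 ((1 / 2) ^ n * Metric.diam (range δ)) :=
  ⟨mul_nonneg (by positivity) (maxDistFrom_nonneg q x),
    mul_le_mul_of_nonneg_left (maxDistFrom_le_diam hδ q x) (by positivity)⟩

lemma summable_fiberCoord (hδ : Continuous δ) (u : ℕ → I) (x : I) :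
    Summable fun n => (1 / 2 : ℝ) ^ n * maxDistFrom δ (u n) x :=
  Summable.of_nonneg_of_le (fun n => (weighted_maxDistFrom_mem_Icc hδ n (u n) x).1)
    (fun n => (weighted_maxDistFrom_mem_Icc hδ n (u n) x).2)
    (summable_geometric_two.mul_right (Metric.diam (range δ)))

lemma continuous_fiberCoord (hδ : Continuous δ) (u : ℕ → I) : Continuous (fiberCoord δ u) :=
  continuous_tsum (fun n => continuous_const.mul (continuous_maxDistFrom hδ (u n)))
    (summable_geometric_two.mul_right (Metric.diam (range δ))) fun n x => by
      have h := weighted_maxDistFrom_mem_Icc hδ n (u n) x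
      rw [Real.norm_eq_abs, abs_of_nonneg h.1]
      exact h.2

lemma monotone_fiberCoord (hδ : Continuous δ) (u : ℕ → I) : Monotone (fiberCoord δ u) :=
  fun x y hxy => Summable.tsum_le_tsum (fun n => mul_le_mul_of_nonneg_left
    (monotone_maxDistFrom hδ _ hxy) (by positivity))
    (summable_fiberCoord hδ u x) (summable_fiberCoord hδ u y)

lemma fiberCoord_eq_of_fiber (hδ : Continuous δ) (u : ℕ → I)
    (hconv : ∀ x y z, δ x = δ y → z ∈ Icc x y → δ z = δ x) {x y : I}
    (hxy : x ≤ y) (hδxy : δ x = δ y) : fiberCoord δ u x = fiberCoord δ u y :=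
  tsum_congr fun n => by rw [maxDistFrom_eq_of_fiber hδ hconv (u n) hxy hδxy]

lemma fiberCoord_lt (hδ : Continuous δ) {u : ℕ → I} (hu : DenseRange u) {x y : I}
    (hxy : x < y) (hδxy : δ x ≠ δ y) : fiberCoord δ u x < fiberCoord δ u y := by
  -- a point `u n` just to the right of `x` has `δ (u n) ≠ δ y`
  have hU : {z | δ z ≠ δ y} ∈ 𝓝[≥] x :=
    mem_nhdsWithin_of_mem_nhds ((isClosed_singleton.preimage hδ).isOpen_compl.mem_nhds hδxy)
  obtain ⟨x', hxx', hx'⟩ := (mem_nhdsGE_iff_exists_Ico_subset' hxy).1 hU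
  obtain ⟨_, ⟨n, rfl⟩, hn⟩ := hu.exists_between (lt_min hxx' hxy)
  refine Summable.tsum_lt_tsum (i := n)
    (fun m => mul_le_mul_of_nonneg_left (monotone_maxDistFrom hδ _ hxy.le) (by positivity))
    (mul_lt_mul_of_pos_left ?_ (by positivity))
    (summable_fiberCoord hδ u x) (summable_fiberCoord hδ u y)
  rw [maxDistFrom_of_le hn.1.le]
  exact (dist_pos.2 (hx' ⟨hn.1.le, hn.2.trans_le (min_le_left _ _)⟩)).trans_le
    (dist_le_maxDistFrom hδ (hn.2.trans_le (min_le_right _ _)).le)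

lemma fiberCoord_eq_iff (hδ : Continuous δ) (hconv : ∀ x y z, δ x = δ y → z ∈ Icc x y → δ z = δ x)
    {u : ℕ → I} (hu : DenseRange u) (x y : I) :
    fiberCoord δ u x = fiberCoord δ u y ↔ δ x = δ y := by
  refine ⟨fun h => by_contra fun hne => ?_, fun h => ?_⟩
  · rcases lt_trichotomy x y with hxy | rfl | hxy
    · exact (fiberCoord_lt hδ hu hxy hne).ne h
    · exact hne rfl
    · exact (fiberCoord_lt hδ hu hxy (Ne.symm hne)).ne' h
  · rcases le_total x y with hxy | hxy
    · exact fiberCoord_eq_of_fiber hδ u hconv hxy h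
    · exact (fiberCoord_eq_of_fiber hδ u hconv hxy h.symm).symm

theorem exists_injective_path_of_fibers_ordConnected (hδ : Continuous δ)
    (hconv : ∀ x y z, δ x = δ y → z ∈ Icc x y → δ z = δ x) (h01 : δ 0 ≠ δ 1) :
    ∃ p : Path (δ 0) (δ 1), Function.Injective p ∧ range p ⊆ range δ := by
  obtain ⟨u, hu⟩ := TopologicalSpace.exists_dense_seq I
  exact exists_injective_path_of_monotone_of_fibers_eq hδ (continuous_fiberCoord hδ u)
    (monotone_fiberCoord hδ u) (fiberCoord_eq_iff hδ hconv hu) h01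

theorem Path.exists_injective_range_subset {x y : X} (γ : Path x y) (hxy : x ≠ y) :
    ∃ p : Path x y, Function.Injective p ∧ range p ⊆ range γ := by
  obtain ⟨M, hM⟩ := exists_minimal_constantAcrossGaps γ.continuous
  have h0 : collapse γ M 0 = x := (collapse_apply_of_mem hM.1.bot_mem).trans γ.source
  have h1 : collapse γ M 1 = y := (collapse_apply_of_mem hM.1.top_mem).trans γ.target
  obtain ⟨p, hp, hrange⟩ := exists_injective_path_of_fibers_ordConnected
    (hM.1.continuous_collapse γ.continuous) (fun _ _ _ => hM.collapse_eq_of_mem_Icc)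
    (by rwa [h0, h1])
  exact ⟨p.cast h0.symm h1.symm, hp, hrange.trans (range_subset_iff.2 fun _ => mem_range_self _)⟩

end Metric

section SimpleClosedCurve

variable {X : Type*} [TopologicalSpace X] {x y : X}

lemma Path.injOn_extend {p : Path x y} (hp : Function.Injective p) : InjOn p.extend (Icc 0 1) :=
  fun s hs t ht h => by
    rw [p.extend_apply hs, p.extend_apply ht] at h
    exact congrArg Subtype.val (hp h)

lemma Path.extend_mem_range (p : Path x y) {s : ℝ} (hs : s ∈ Icc 0 1) : p.extend s ∈ range p := by
  rw [p.extend_apply hs]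
  exact mem_range_self _

lemma Path.injOn_extend_trans_symm {p q : Path x y} (hp : Function.Injective p)
    (hq : Function.Injective q) (hpq : range p ∩ range q ⊆ {x, y}) :
    InjOn (p.trans q.symm).extend (Ico 0 1) := by
  have hlow {t : ℝ} (ht : t ≤ 1 / 2) : (p.trans q.symm).extend t = p.extend (2 * t) :=
    p.extend_trans_of_le_half _ ht
  have hhigh {t : ℝ} (ht : 1 / 2 ≤ t) : (p.trans q.symm).extend t = q.extend (2 - 2 * t) := by
    rw [p.extend_trans_of_half_le _ ht, q.extend_symm_apply]
    ring_nf
  -- `p` meets the second half only at `x = q 0` and `y = q 1`, reached at `t = 1` and `t = 1 / 2`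
  have hmixed {s t : ℝ} (hs : s ∈ Icc 0 (1 / 2)) (ht : t ∈ Ioo (1 / 2) 1) :
      (p.trans q.symm).extend s ≠ (p.trans q.symm).extend t := by
    intro h
    rw [hlow hs.2, hhigh ht.1.le] at h
    have h2t : 2 - 2 * t ∈ Icc (0 : ℝ) 1 := ⟨by linarith [ht.2], by linarith [ht.1]⟩
    rcases hpq ⟨h ▸ p.extend_mem_range ⟨by linarith [hs.1], by linarith [hs.2]⟩,
      q.extend_mem_range h2t⟩ with hx | hy
    · have := Path.injOn_extend hq h2t (left_mem_Icc.2 zero_le_one) (hx.trans q.extend_zero.symm)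
      linarith [ht.2]
    · have := Path.injOn_extend hq h2t (right_mem_Icc.2 zero_le_one) (hy.trans q.extend_one.symm)
      linarith [ht.1]
  intro s hs t ht h
  rcases le_or_gt s (1 / 2) with hs2 | hs2 <;> rcases le_or_gt t (1 / 2) with ht2 | ht2
  · rw [hlow hs2, hlow ht2] at h
    have := Path.injOn_extend hp ⟨by linarith [hs.1], by linarith⟩
      ⟨by linarith [ht.1], by linarith⟩ h
    linarith
  · exact absurd h (hmixed ⟨hs.1, hs2⟩ ⟨ht2, ht.2⟩)
  · exact absurd h.symm (hmixed ⟨ht.1, ht2⟩ ⟨hs2, hs.2⟩)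
  · rw [hhigh hs2.le, hhigh ht2.le] at h
    have := Path.injOn_extend hq ⟨by linarith [hs.2], by linarith⟩
      ⟨by linarith [ht.2], by linarith⟩ h
    linarith

theorem Path.exists_isEmbedding_circle [T2Space X] (γ : Path x x)
    (hγ : InjOn γ.extend (Ico 0 1)) : ∃ e : Circle → X, IsEmbedding e := by
  have : Fact ((0 : ℝ) < 1) := ⟨zero_lt_one⟩
  have hcont : Continuous (AddCircle.liftIco 1 0 γ.extend) :=
    AddCircle.liftIco_zero_continuous (by simp) γ.continuous_extend.continuousOn
  have hinj : Function.Injective (AddCircle.liftIco 1 0 γ.extend) := by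
    intro z w hzw
    obtain ⟨s, hs, rfl⟩ := AddCircle.eq_coe_Ico z
    obtain ⟨t, ht, rfl⟩ := AddCircle.eq_coe_Ico w
    rw [AddCircle.liftIco_zero_coe_apply hs, AddCircle.liftIco_zero_coe_apply ht] at hzw
    rw [hγ hs ht hzw]
  let c := (AddCircle.homeomorphCircle one_ne_zero).symm
  exact ⟨_, ((hcont.comp c.continuous).isClosedEmbedding (hinj.comp c.injective)).isEmbedding⟩

lemma Path.exists_path_meeting_range_only_at_ends [T2Space X] {a b : X} {α β : Path a b}
    (hα : Function.Injective α) {t₀ : I} (hβ : ∀ s, β s ≠ α t₀) :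
    ∃ c d : I, c < d ∧ ∃ β' : Path (α c) (α d), range β' ∩ range α ⊆ {α c, α d} := by
  -- `u` is the last time `β` visits `α '' Iic t₀`, and `v` the first later time it visits
  -- `α '' Ici t₀`; in between, `β` stays off `α`
  set u := sSup {s | β s ∈ α '' Iic t₀}
  obtain ⟨c, hc, hcu⟩ : u ∈ {s | β s ∈ α '' Iic t₀} :=
    IsClosed.sSup_mem ⟨0, 0, nonneg', by simp⟩
      ((isClosed_Iic.isCompact.image α.continuous).isClosed.preimage β.continuous)
  set v := sInf {s | u ≤ s ∧ β s ∈ α '' Ici t₀}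
  obtain ⟨huv, d, hd, hdv⟩ : v ∈ {s | u ≤ s ∧ β s ∈ α '' Ici t₀} :=
    IsClosed.sInf_mem ⟨1, le_one', 1, le_one', by simp⟩
      (isClosed_Ici.inter
        ((isClosed_Ici.isCompact.image α.continuous).isClosed.preimage β.continuous))
  have hct : c < t₀ := hc.lt_of_ne fun h => hβ u (by rw [← hcu, h])
  have hcd : c < d := hct.trans_le hd
  have huv : u < v := huv.lt_of_ne fun h => hα.ne hcd.ne (by rw [hcu, hdv, h])
  have hmid (s : I) (hs : s ∈ Ioo u v) : β s ∉ range α := by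
    rintro ⟨e, he⟩
    rcases le_total e t₀ with h | h
    · exact hs.1.not_ge (le_sSup ⟨e, h, he⟩)
    · exact hs.2.not_ge (sInf_le ⟨hs.1.le, e, h, he⟩)
  refine ⟨c, d, hcd, (β.subpath u v).cast hcu hdv, fun z ⟨hz, hzα⟩ => ?_⟩
  obtain ⟨s, hs, rfl⟩ : z ∈ β '' uIcc u v := by rwa [← Path.range_subpath]
  rw [uIcc_of_le huv.le] at hs
  rcases hs.1.eq_or_lt with rfl | hus
  · exact .inl hcu.symm
  rcases hs.2.eq_or_lt with rfl | hsv
  · exact .inr hdv.symm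
  exact absurd hzα (hmid s ⟨hus, hsv⟩)

end SimpleClosedCurve

theorem stmt16_general {X : Type} [MetricSpace X] [ConnectedSpace X]
    [LocallyPathConnectedSpace X] [Nontrivial X]
    (hnocut : ∀ x : X, IsConnected ({x}ᶜ : Set X)) :
    ∃ e : Circle → X, Topology.IsEmbedding e := by
  obtain ⟨a, b, hab⟩ := exists_pair_ne X
  have : PathConnectedSpace X := pathConnectedSpace_iff_connectedSpace.2 ‹_›
  obtain ⟨α, hα, -⟩ := (PathConnectedSpace.somePath a b).exists_injective_range_subset hab
  let t₀ : I := ⟨1 / 2, by norm_num, by norm_num⟩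
  have hne (s : I) (hs : (s : ℝ) ≠ 1 / 2) : α s ∈ ({α t₀}ᶜ : Set X) :=
    hα.ne fun h => hs (congrArg Subtype.val h)
  have hβ : JoinedIn {α t₀}ᶜ a b :=
    (isOpen_compl_singleton.isConnected_iff_isPathConnected.1 (hnocut (α t₀))).joinedIn a
      (by simpa using hne 0 (by norm_num)) b (by simpa using hne 1 (by norm_num))
  obtain ⟨c, d, hcd, β, hβα⟩ :=
    Path.exists_path_meeting_range_only_at_ends hα (β := hβ.somePath) hβ.somePath_mem
  obtain ⟨α₁, hα₁, hα₁α⟩ := (α.subpath c d).exists_injective_range_subset (hα.ne hcd.ne)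
  obtain ⟨β₁, hβ₁, hβ₁β⟩ := β.exists_injective_range_subset (hα.ne hcd.ne)
  refine (α₁.trans β₁.symm).exists_isEmbedding_circle
    (Path.injOn_extend_trans_symm hα₁ hβ₁ fun z hz => hβα ⟨hβ₁β hz.2, ?_⟩)
  obtain ⟨s, -, hs⟩ := (α.range_subpath c d ▸ hα₁α hz.1 :)
  exact ⟨s, hs⟩

/-- A connected, locally path-connected, compact metric space with more than one point and
no cut points contains a simple closed curve. -/
theorem stmt16 {X : Type} [MetricSpace X] [CompactSpace X] [ConnectedSpace X]
    [LocallyPathConnectedSpace X] [Nontrivial X]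
    (hnocut : ∀ x : X, IsConnected ({x}ᶜ : Set X)) :
    ∃ e : Circle → X, Topology.IsEmbedding e :=
  stmt16_general hnocut
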